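/- Let ε > 0, δ > 0 and let L ≥ 2 be an integer with 2ε < δ ≤ 1/L. Let φ be an (ε,δ,L)-private learner strategy of length N. Then for every x ∈ [0,1) and every seed y, the set consisting of the queries q_1(x,y),…,q_N(x,y) together with the point 1 contains at least 2L − 3 points that lie in [δ,1] and are endpoints of some special interval of q̄(x,y). -/

import Mathlib

open Set

/-- A learner strategy of length `N` with seed space `Fin Y` (representing `{1,…,𝒴}`):
query functions mapping previous responses and the seed to a query in `[0,1)`,
and an estimation function mapping all responses and the seed to an estimate in `[0,1)`. -/
structure Strategy (N Y : ℕ) where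
  query : (k : Fin N) → (Fin (k : ℕ) → Bool) → Fin Y → ℝ
  estimate : (Fin N → Bool) → Fin Y → ℝ
  query_mem : ∀ k h y, query k h y ∈ Set.Ico (0 : ℝ) 1
  estimate_mem : ∀ r y, estimate r y ∈ Set.Ico (0 : ℝ) 1

namespace Strategy

variable {N Y : ℕ}

/-- The first `k` responses when the true value is `x` and the seed is `y`:
`r_k = 1` iff `x ≥ q_k`. -/
noncomputable def resps (φ : Strategy N Y) (x : ℝ) (y : Fin Y) : (k : ℕ) → Fin k → Bool
  | 0 => Fin.elim0
  | k + 1 => fun i =>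
      if h : (i : ℕ) < k then resps φ x y k ⟨i, h⟩
      else if hk : k < N then decide (φ.query ⟨k, hk⟩ (resps φ x y k) y ≤ x)
      else false

/-- The query sequence `q̄(x,y)`. -/
noncomputable def queries (φ : Strategy N Y) (x : ℝ) (y : Fin Y) : Fin N → ℝ :=
  fun k => φ.query k (resps φ x y (k : ℕ)) y

/-- The learner's estimate `x̂(x,y)`. -/
noncomputable def estim (φ : Strategy N Y) (x : ℝ) (y : Fin Y) : ℝ :=
  φ.estimate (resps φ x y N) y

/-- `Q(x)`: the set of query sequences that can arise when the true value is `x`. -/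
def Q (φ : Strategy N Y) (x : ℝ) : Set (Fin N → ℝ) :=
  {q | ∃ y : Fin Y, φ.queries x y = q}

/-- The information set `I(q̄)` of the adversary. -/
def infoSet (φ : Strategy N Y) (q : Fin N → ℝ) : Set ℝ :=
  {x | x ∈ Set.Ico (0 : ℝ) 1 ∧ q ∈ φ.Q x}

/-- The accuracy constraint with parameter `ε`. -/
def Accurate (ε : ℝ) (φ : Strategy N Y) : Prop :=
  ∀ x ∈ Set.Ico (0 : ℝ) 1, ∀ y : Fin Y, |φ.estim x y - x| ≤ ε / 2

end Strategy

/-- `E` is `(δ,L)`-coverable: `E` is contained in the union of `L` closed intervals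
of length at most `δ` each. -/
def Coverable (δ : ℝ) (L : ℕ) (E : Set ℝ) : Prop :=
  ∃ a b : Fin L → ℝ, (∀ j, b j - a j ≤ δ) ∧ E ⊆ ⋃ j, Set.Icc (a j) (b j)

/-- The `δ`-cover number `C_δ(E)`: the least positive `L` such that `E` is `(δ,L)`-coverable. -/
noncomputable def coverNumber (δ : ℝ) (E : Set ℝ) : ℕ :=
  sInf {L : ℕ | 0 < L ∧ Coverable δ L E}

/-- An `(ε,δ,L)`-private learner strategy. -/
def IsPrivate (ε δ : ℝ) (L : ℕ) {N Y : ℕ} (φ : Strategy N Y) : Prop :=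
  φ.Accurate ε ∧ ∀ x ∈ Set.Ico (0 : ℝ) 1, ∀ q ∈ φ.Q x, L ≤ coverNumber δ (φ.infoSet q)

/-- `N*(ε,δ,L)`: the least length for which an `(ε,δ,L)`-private strategy exists. -/
noncomputable def Nstar (ε δ : ℝ) (L : ℕ) : ℕ :=
  sInf {N : ℕ | ∃ Y : ℕ, 0 < Y ∧ ∃ φ : Strategy N Y, IsPrivate ε δ L φ}

/-! Privacy forces the information set `I(q̄)` to contain `L` points that are pairwise more
than `δ` apart. Each point `t` of `I(q̄)` lies in a cell `[a, b)` between consecutive augmented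
queries, and the seed producing `q̄` from `t` answers every `t' ∈ [a, b)` in the same way, so
accuracy forces `b - a ≤ ε`: the cell is special. The upper endpoints of the cells of the `L - 1`
largest points and the lower endpoints of those of the `L - 2` largest lie in `[δ, 1]`, and they
are distinct because each lies within `ε` of its point while the points are `δ > 2ε` apart. -/

section Covering

variable {δ : ℝ} {n : ℕ} {E F : Set ℝ}

theorem Coverable.mono (h : Coverable δ n E) (hFE : F ⊆ E) : Coverable δ n F := by
  obtain ⟨a, b, hlen, hcov⟩ := h
  exact ⟨a, b, hlen, hFE.trans hcov⟩

theorem Coverable.Icc_union (h : Coverable δ n E) (a : ℝ) :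
    Coverable δ (n + 1) (Icc a (a + δ) ∪ E) := by
  obtain ⟨a', b', hlen, hcov⟩ := h
  refine ⟨Fin.cons a a', Fin.cons (a + δ) b', fun j => Fin.cases (by simp)
    (fun j => by simpa using hlen j) j, ?_⟩
  rintro z (hz | hz)
  · exact mem_iUnion.2 ⟨0, by simpa using hz⟩
  · obtain ⟨j, hj⟩ := mem_iUnion.1 (hcov hz)
    exact mem_iUnion.2 ⟨j.succ, by simpa using hj⟩

theorem nonempty_of_not_coverable (h : ¬ Coverable δ n E) : E.Nonempty := by
  refine nonempty_iff_ne_empty.2 fun hE => h ⟨fun _ => 0, fun _ => δ, fun _ => by simp, ?_⟩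
  simp [hE]

theorem not_coverable_of_lt_coverNumber (hn : 0 < n) (h : n < coverNumber δ E) :
    ¬ Coverable δ n E :=
  fun hcov => (Nat.sInf_le ⟨hn, hcov⟩ : coverNumber δ E ≤ n).not_gt h

/-- Greedy choice: take a point near `inf E` and recurse on the points more than `δ` above
`inf E`, which cannot be covered by one interval fewer. -/
theorem exists_separated_of_not_coverable (hE : BddBelow E) (h : ¬ Coverable δ n E) :
    ∃ e : Fin (n + 1) → ℝ, (∀ i, e i ∈ E) ∧ ∀ i j, i < j → e i + δ < e j := by
  induction n generalizing E with
  | zero =>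
    obtain ⟨z, hz⟩ := nonempty_of_not_coverable h
    exact ⟨fun _ => z, fun _ => hz, fun i j hij => absurd hij (Subsingleton.elim (α := Fin 1) i j).not_lt⟩
  | succ n ih =>
    have hne := nonempty_of_not_coverable h
    set E' := {z ∈ E | sInf E + δ < z}
    have hE' : ¬ Coverable δ n E' := fun hcov => h <| (hcov.Icc_union (sInf E)).mono
      fun z hz => (le_or_gt z (sInf E + δ)).imp (fun hz' => ⟨csInf_le hE hz, hz'⟩) (⟨hz, ·⟩)
    obtain ⟨e, he, hgap⟩ := ih (hE.mono fun z hz => hz.1) hE'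
    obtain ⟨j₀, hj₀⟩ := Finite.exists_min e
    obtain ⟨e₀, he₀, he₀lt⟩ := (csInf_lt_iff hE hne).1
      (show sInf E < e j₀ - δ by linarith [(he j₀).2])
    refine ⟨Fin.cons e₀ e, fun i => Fin.cases he₀ (fun i => (he i).1) i, ?_⟩
    intro i j hij
    induction j using Fin.cases with
    | zero => exact absurd hij (Fin.not_lt_zero i)
    | succ j =>
      induction i using Fin.cases with
      | zero => simpa using (show e₀ + δ < e j by linarith [hj₀ j])
      | succ i => simpa using hgap i j (Fin.succ_lt_succ_iff.1 hij)

end Covering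

theorem eq_of_abs_sub_le_of_separated {ι : Type*} [LinearOrder ι] {e : ι → ℝ} {δ ε p : ℝ}
    (hgap : ∀ i j, i < j → e i + δ < e j) (hεδ : 2 * ε < δ) {i j : ι}
    (hi : |p - e i| ≤ ε) (hj : |p - e j| ≤ ε) : i = j := by
  rw [abs_le] at hi hj
  rcases lt_trichotomy i j with h | h | h
  · linarith [hgap i j h]
  · exact h
  · linarith [hgap j i h]

theorem exists_consecutive_mem_of_finite {α : Type*} [LinearOrder α] {S : Set α}
    (hS : S.Finite) {a b t : α} (ha : a ∈ S) (hb : b ∈ S) (hat : a ≤ t) (htb : t < b) :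
    ∃ A ∈ S, ∃ B ∈ S, A ≤ t ∧ t < B ∧ ∀ c ∈ S, c ≤ A ∨ B ≤ c := by
  obtain ⟨A, ⟨hA, hAt⟩, hAmax⟩ := exists_max_image _ id (hS.inter_of_left (Iic t)) ⟨a, ha, hat⟩
  obtain ⟨B, ⟨hB, htB⟩, hBmin⟩ := exists_min_image _ id (hS.inter_of_left (Ioi t)) ⟨b, hb, htb⟩
  refine ⟨A, hA, B, hB, hAt, htB, fun c hc => ?_⟩
  rcases le_or_gt c t with h | h
  · exact .inl (hAmax c ⟨hc, h⟩)
  · exact .inr (hBmin c ⟨hc, h⟩)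

namespace Strategy

variable {N Y : ℕ} (φ : Strategy N Y)

/-- The special intervals of `q̄` are the gaps of length at most `ε` between consecutive
elements of this set. -/
def cutPoints (x : ℝ) (y : Fin Y) : Set ℝ :=
  insert 0 (insert 1 (range (φ.queries x y)))

def specialEndpoints (ε δ x : ℝ) (y : Fin Y) : Set ℝ :=
  {s | s ∈ Icc δ 1 ∧ (s = 1 ∨ ∃ k, φ.queries x y k = s) ∧
    ∃ a ∈ φ.cutPoints x y, ∃ b ∈ φ.cutPoints x y, a < b ∧ b - a ≤ ε ∧
      (∀ c ∈ φ.cutPoints x y, c ≤ a ∨ b ≤ c) ∧ (s = a ∨ s = b)}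

variable {φ}

theorem finite_cutPoints (x : ℝ) (y : Fin Y) : (φ.cutPoints x y).Finite :=
  ((finite_range _).insert 1).insert 0

theorem cutPoints_subset_Icc (x : ℝ) (y : Fin Y) : φ.cutPoints x y ⊆ Icc 0 1 := by
  rintro c (rfl | rfl | ⟨k, rfl⟩)
  · simp
  · simp
  · exact Ico_subset_Icc_self (φ.query_mem k _ y)

theorem resps_eq_of_forall_query_le_iff {t t' : ℝ} {y : Fin Y}
    (H : ∀ k, φ.queries t y k ≤ t ↔ φ.queries t y k ≤ t') (n : ℕ) :
    φ.resps t' y n = φ.resps t y n := by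
  induction n with
  | zero => funext i; exact i.elim0
  | succ n ih =>
    funext i
    simp only [resps, ih]
    split_ifs with _ hn
    · rfl
    · exact decide_eq_decide.2 (H ⟨n, hn⟩).symm
    · rfl

theorem estim_eq_of_forall_query_le_iff {t t' : ℝ} {y : Fin Y}
    (H : ∀ k, φ.queries t y k ≤ t ↔ φ.queries t y k ≤ t') : φ.estim t' y = φ.estim t y := by
  simp only [estim, resps_eq_of_forall_query_le_iff H]

/-- The seed that produces `q̄` from `t` answers every point of the cell of `t` like `t` itself,
so accuracy pins the whole cell to within `ε / 2` of one estimate. -/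
theorem sub_le_of_consecutive {ε x t a b : ℝ} {y : Fin Y} (hacc : φ.Accurate ε)
    (ht : t ∈ φ.infoSet (φ.queries x y)) (ha : a ∈ φ.cutPoints x y) (hb : b ∈ φ.cutPoints x y)
    (hat : a ≤ t) (htb : t < b) (hsep : ∀ c ∈ φ.cutPoints x y, c ≤ a ∨ b ≤ c) : b - a ≤ ε := by
  obtain ⟨-, y', hy'⟩ := ht
  have hcell : Ico a b ⊆ Icc (φ.estim t y' - ε / 2) (φ.estim t y' + ε / 2) := by
    intro t' ht'
    have H : ∀ k, φ.queries t y' k ≤ t ↔ φ.queries t y' k ≤ t' := by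
      intro k
      have hk : φ.queries t y' k ∈ φ.cutPoints x y := by
        rw [hy']
        exact mem_insert_of_mem _ (mem_insert_of_mem _ (mem_range_self k))
      rcases hsep _ hk with h | h
      · exact ⟨fun _ => h.trans ht'.1, fun _ => h.trans hat⟩
      · exact ⟨fun h' => absurd (h.trans h') htb.not_ge, fun h' => absurd (h.trans h') ht'.2.not_ge⟩
    have hmem : t' ∈ Ico (0 : ℝ) 1 :=
      ⟨(cutPoints_subset_Icc x y ha).1.trans ht'.1, ht'.2.trans_le (cutPoints_subset_Icc x y hb).2⟩
    have := hacc t' hmem y'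
    rw [estim_eq_of_forall_query_le_iff H, abs_le] at this
    constructor <;> linarith
  have hab := hat.trans_lt htb
  have := closure_mono hcell
  rw [closure_Ico hab.ne, isClosed_Icc.closure_eq, Icc_subset_Icc_iff hab.le] at this
  linarith [this.1, this.2]

theorem exists_special_cell {ε x t : ℝ} {y : Fin Y} (hacc : φ.Accurate ε)
    (ht : t ∈ φ.infoSet (φ.queries x y)) :
    ∃ a ∈ φ.cutPoints x y, ∃ b ∈ φ.cutPoints x y, a ≤ t ∧ t < b ∧ b - a ≤ ε ∧
      ∀ c ∈ φ.cutPoints x y, c ≤ a ∨ b ≤ c := by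
  obtain ⟨a, ha, b, hb, hat, htb, hsep⟩ := exists_consecutive_mem_of_finite (finite_cutPoints x y)
    (mem_insert 0 _) (mem_insert_of_mem _ (mem_insert 1 _)) ht.1.1 ht.1.2
  exact ⟨a, ha, b, hb, hat, htb, sub_le_of_consecutive hacc ht ha hb hat htb hsep, hsep⟩

theorem mem_specialEndpoints {ε δ x a b s : ℝ} {y : Fin Y} (ha : a ∈ φ.cutPoints x y)
    (hb : b ∈ φ.cutPoints x y) (hab : a < b) (hba : b - a ≤ ε)
    (hsep : ∀ c ∈ φ.cutPoints x y, c ≤ a ∨ b ≤ c) (hs : s = a ∨ s = b) (hδ : 0 < δ)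
    (hδs : δ ≤ s) : s ∈ φ.specialEndpoints ε δ x y := by
  have hsS : s ∈ φ.cutPoints x y := by rcases hs with rfl | rfl <;> assumption
  refine ⟨⟨hδs, (cutPoints_subset_Icc x y hsS).2⟩, ?_, a, ha, b, hb, hab, hba, hsep, hs⟩
  rcases hsS with h0 | h1 | hq
  · exact absurd h0 (by linarith)
  · exact .inl h1
  · exact .inr hq

theorem two_mul_add_one_le_ncard_specialEndpoints {ε δ x : ℝ} {y : Fin Y} {n : ℕ}
    (hacc : φ.Accurate ε) (hεδ : 2 * ε < δ) {e : Fin (n + 2) → ℝ}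
    (he : ∀ i, e i ∈ φ.infoSet (φ.queries x y)) (hgap : ∀ i j, i < j → e i + δ < e j) :
    2 * n + 1 ≤ (φ.specialEndpoints ε δ x y).ncard := by
  choose a ha b hb hae heb hba hsep using fun i => exists_special_cell hacc (he i)
  have hε : 0 < ε := by linarith [hae 0, heb 0, hba 0]
  have hδ : 0 < δ := by linarith
  have he₀ : 0 ≤ e 0 := (he 0).1.1
  have ha_near i : |a i - e i| ≤ ε := by
    rw [abs_le]; constructor <;> linarith [hae i, heb i, hba i]
  have hb_near i : |b i - e i| ≤ ε := by
    rw [abs_le]; constructor <;> linarith [hae i, heb i, hba i]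
  have ha_inj : Function.Injective a := fun i j h =>
    eq_of_abs_sub_le_of_separated hgap hεδ (ha_near i) (h ▸ ha_near j)
  have hb_inj : Function.Injective b := fun i j h =>
    eq_of_abs_sub_le_of_separated hgap hεδ (hb_near i) (h ▸ hb_near j)
  have hb_ne_a i j : b i ≠ a j := fun h => by
    obtain rfl := eq_of_abs_sub_le_of_separated hgap hεδ (hb_near i) (h ▸ ha_near j)
    linarith [hae i, heb i]
  set f : Fin (n + 1) ⊕ Fin n → ℝ := Sum.elim (fun i => b i.succ) (fun j => a j.succ.succ)
  have hf_inj : Function.Injective f :=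
    (hb_inj.comp (Fin.succ_injective _)).sumElim
      (ha_inj.comp ((Fin.succ_injective _).comp (Fin.succ_injective _))) fun i j => hb_ne_a _ _
  have hf_mem : ∀ p, f p ∈ φ.specialEndpoints ε δ x y := by
    rintro (i | j)
    · refine mem_specialEndpoints (ha _) (hb _) ((hae _).trans_lt (heb _)) (hba _) (hsep _)
        (.inr rfl) hδ ?_
      show δ ≤ b i.succ
      linarith [hgap 0 i.succ (Fin.succ_pos i), heb i.succ]
    · refine mem_specialEndpoints (ha _) (hb _) ((hae _).trans_lt (heb _)) (hba _) (hsep _)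
        (.inl rfl) hδ ?_
      show δ ≤ a j.succ.succ
      linarith [hgap 0 1 Fin.zero_lt_one, hgap 1 j.succ.succ (Fin.lt_def.2 (by simp)), heb j.succ.succ,
        hba j.succ.succ]
  have hfin : (φ.specialEndpoints ε δ x y).Finite :=
    (finite_cutPoints x y).subset fun s hs => by
      obtain ⟨-, -, a, ha, b, hb, -, -, -, rfl | rfl⟩ := hs <;> assumption
  calc 2 * n + 1 = (univ : Set (Fin (n + 1) ⊕ Fin n)).ncard := by
        rw [ncard_univ, Nat.card_sum, Nat.card_fin, Nat.card_fin]; ring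
    _ ≤ _ := ncard_le_ncard_of_injOn f (fun p _ => hf_mem p) hf_inj.injOn hfin

end Strategy

theorem many_special_queries_general {N Y : ℕ} (ε δ : ℝ) (L : ℕ) (hL : 2 ≤ L)
    (h1 : 2 * ε < δ)
    (φ : Strategy N Y) (hpriv : IsPrivate ε δ L φ) :
    ∀ x ∈ Set.Ico (0 : ℝ) 1, ∀ y : Fin Y,
      2 * L - 3 ≤
        Set.ncard {s : ℝ | s ∈ Set.Icc δ 1 ∧ (s = 1 ∨ ∃ k, φ.queries x y k = s) ∧
          ∃ a ∈ insert (0 : ℝ) (insert 1 (Set.range (φ.queries x y))),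
          ∃ b ∈ insert (0 : ℝ) (insert 1 (Set.range (φ.queries x y))),
            a < b ∧ b - a ≤ ε ∧
            (∀ c ∈ insert (0 : ℝ) (insert 1 (Set.range (φ.queries x y))), c ≤ a ∨ b ≤ c) ∧
            (s = a ∨ s = b)} := by
  intro x hx y
  obtain ⟨n, rfl⟩ : ∃ n, L = n + 2 := ⟨L - 2, by omega⟩
  have hcov : ¬ Coverable δ (n + 1) (φ.infoSet (φ.queries x y)) :=
    not_coverable_of_lt_coverNumber n.succ_pos (hpriv.2 x hx _ ⟨y, rfl⟩)
  obtain ⟨e, he, hgap⟩ := exists_separated_of_not_coverable ⟨0, fun t ht => ht.1.1⟩ hcov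
  calc 2 * (n + 2) - 3 = 2 * n + 1 := by omega
    _ ≤ (φ.specialEndpoints ε δ x y).ncard :=
      Strategy.two_mul_add_one_le_ncard_specialEndpoints hpriv.1 h1 he hgap

/-- under an `(ε,δ,L)`-private strategy, for every true value `x ∈ [0,1)` and
seed `y`, the queries `q_1(x,y),…,q_N(x,y)` together with the point `1` contain at least
`2L − 3` points that lie in `[δ,1]` and are endpoints of special intervals of `q̄(x,y)`. -/
theorem many_special_queries {N Y : ℕ} (ε δ : ℝ) (L : ℕ) (hL : 2 ≤ L)
    (hε : 0 < ε) (h1 : 2 * ε < δ) (h2 : δ ≤ 1 / (L : ℝ))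
    (φ : Strategy N Y) (hpriv : IsPrivate ε δ L φ) :
    ∀ x ∈ Set.Ico (0 : ℝ) 1, ∀ y : Fin Y,
      2 * L - 3 ≤
        Set.ncard {s : ℝ | s ∈ Set.Icc δ 1 ∧ (s = 1 ∨ ∃ k, φ.queries x y k = s) ∧
          ∃ a ∈ insert (0 : ℝ) (insert 1 (Set.range (φ.queries x y))),
          ∃ b ∈ insert (0 : ℝ) (insert 1 (Set.range (φ.queries x y))),
            a < b ∧ b - a ≤ ε ∧
            (∀ c ∈ insert (0 : ℝ) (insert 1 (Set.range (φ.queries x y))), c ≤ a ∨ b ≤ c) ∧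
            (s = a ∨ s = b)} :=
  many_special_queries_general ε δ L hL h1 φ hpriv
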